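/- arXiv:1911.00249 — 6 statements merged into one kernel-verified Lean document; each statement's English description precedes it below -/
import Mathlib

section
/- For a spin chain with Hamiltonian H(z_u, z_v, s) = -∑_{i=1}^{k} J_i s_{i-1} s_i (where s_0 = z_u, s_k = z_v, s_i ∈ {-1,+1} for internal spins), the minimum over internal spin assignments s equals -∑_i |J_i| if z_v = (-1)^p z_u, and -∑_i |J_i| + 2·min_i |J_i| if z_v = -(-1)^p z_u, where p is the number of indices i with J_i < 0. -/
/-!
Pass to the bond variables `t i = s i.castSucc * s i.succ ∈ {±1}`. Since `s (last k) = zu * ∏ t`,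
spin configurations with the prescribed ends correspond exactly to bond configurations with
`∏ t = zu * zv`, and the energy `-∑ J i * t i` is at least `-∑ |J i|`, with equality exactly when
every bond is satisfied, `t i = sign (J i)`, which forces `∏ t = (-1) ^ p`. Otherwise some bond is
frustrated and costs `2 |J i|`, and frustrating only the weakest bond is optimal.
-/

open Finset

section Involutions

variable {M : Type*} [CommMonoid M]

theorem Finset.prod_mul_self_eq_one {ι : Type*} {s : Finset ι} {f : ι → M}
    (hf : ∀ i, f i * f i = 1) : (∏ i ∈ s, f i) * ∏ i ∈ s, f i = 1 := by
  rw [← prod_mul_distrib]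
  exact prod_eq_one fun i _ => hf i

theorem Fin.prod_castSucc_mul_succ_of_mul_self {k : ℕ} (s : Fin (k + 1) → M)
    (hs : ∀ i, s i * s i = 1) :
    ∏ i : Fin k, s i.castSucc * s i.succ = s 0 * s (Fin.last k) := by
  induction k with
  | zero => simp [hs 0]
  | succ k ih =>
    rw [Fin.prod_univ_castSucc]
    simp only [Fin.succ_castSucc]
    rw [ih (fun i => s i.castSucc) (fun i => hs _), Fin.castSucc_zero, mul_assoc,
      ← mul_assoc (s (Fin.last k).castSucc), hs, one_mul]
    rfl

theorem Fin.partialProd_mul_self {k : ℕ} {t : Fin k → M} (ht : ∀ i, t i * t i = 1)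
    (j : Fin (k + 1)) : Fin.partialProd t j * Fin.partialProd t j = 1 := by
  induction j using Fin.induction with
  | zero => simp
  | succ i ih =>
    rw [Fin.partialProd_succ, mul_mul_mul_comm, ih, ht, one_mul]

theorem Fin.exists_castSucc_mul_succ_eq {k : ℕ} {z : M} (hz : z * z = 1) {t : Fin k → M}
    (ht : ∀ i, t i * t i = 1) :
    ∃ s : Fin (k + 1) → M, (∀ j, s j * s j = 1) ∧ s 0 = z ∧
      ∀ i, s i.castSucc * s i.succ = t i := by
  refine ⟨fun j => z * Fin.partialProd t j, fun j => ?_, by simp, fun i => ?_⟩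
  · rw [mul_mul_mul_comm, hz, Fin.partialProd_mul_self ht, one_mul]
  · dsimp only
    rw [Fin.partialProd_succ, mul_mul_mul_comm, hz, one_mul, ← mul_assoc,
      Fin.partialProd_mul_self ht, one_mul]

end Involutions

theorem eq_neg_of_mul_self_eq_one_of_ne {R : Type*} [CommRing R] [NoZeroDivisors R] {a b : R}
    (ha : a * a = 1) (hb : b * b = 1) (hne : a ≠ b) : a = -b :=
  (mul_self_eq_mul_self_iff.1 (ha.trans hb.symm)).resolve_left hne

theorem mem_neg_one_one_iff_mul_self_eq_one {R : Type*} [Ring R] [NoZeroDivisors R] {x : R} :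
    x ∈ ({-1, 1} : Set R) ↔ x * x = 1 := by
  rw [mul_self_eq_one_iff, or_comm]
  rfl

noncomputable def bondSign (x : ℝ) : ℝ := if x < 0 then -1 else 1

theorem bondSign_mul_self (x : ℝ) : bondSign x * bondSign x = 1 := by
  unfold bondSign
  split_ifs <;> norm_num

theorem mul_bondSign (x : ℝ) : x * bondSign x = |x| := by
  unfold bondSign
  split_ifs with hx
  · rw [abs_of_neg hx, mul_neg_one]
  · rw [abs_of_nonneg (not_lt.1 hx), mul_one]

theorem prod_bondSign {ι : Type*} [Fintype ι] (J : ι → ℝ) :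
    ∏ i, bondSign (J i) = (-1) ^ #{i | J i < 0} := by
  simp [bondSign, prod_ite]

theorem mul_le_abs_of_mul_self_eq_one {x t : ℝ} (ht : t * t = 1) : x * t ≤ |x| := by
  rcases mul_self_eq_one_iff.1 ht with rfl | rfl <;> simp [le_abs_self, neg_le_abs]

theorem mul_eq_neg_abs_of_ne_bondSign {x t : ℝ} (ht : t * t = 1) (hne : t ≠ bondSign x) :
    x * t = -|x| := by
  rw [eq_neg_of_mul_self_eq_one_of_ne ht (bondSign_mul_self x) hne, mul_neg, mul_bondSign]

section Bonds

variable {ι : Type*} [Fintype ι]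

def bondEnergies (J : ι → ℝ) (c : ℝ) : Set ℝ :=
  {E | ∃ t : ι → ℝ, (∀ i, t i * t i = 1) ∧ ∏ i, t i = c ∧ E = -∑ i, J i * t i}

theorem neg_sum_abs_le_of_mem_bondEnergies {J : ι → ℝ} {c E : ℝ} (hE : E ∈ bondEnergies J c) :
    -∑ i, |J i| ≤ E := by
  obtain ⟨t, ht, -, rfl⟩ := hE
  exact neg_le_neg (sum_le_sum fun i _ => mul_le_abs_of_mul_self_eq_one (ht i))

theorem exists_neg_sum_abs_add_le_of_mem_bondEnergies {J : ι → ℝ} {c E : ℝ}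
    (hc : c ≠ ∏ i, bondSign (J i)) (hE : E ∈ bondEnergies J c) :
    ∃ i, -∑ j, |J j| + 2 * |J i| ≤ E := by
  obtain ⟨t, ht, rfl, rfl⟩ := hE
  obtain ⟨i, hi⟩ : ∃ i, t i ≠ bondSign (J i) := by
    by_contra! h
    exact hc (prod_congr rfl fun i _ => h i)
  have hflip : J i * t i = -|J i| := mul_eq_neg_abs_of_ne_bondSign (ht i) hi
  have hgap : |J i| - J i * t i ≤ ∑ j, (|J j| - J j * t j) :=
    single_le_sum (fun j _ => sub_nonneg.2 (mul_le_abs_of_mul_self_eq_one (ht j))) (mem_univ i)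
  refine ⟨i, ?_⟩
  rw [sum_sub_distrib] at hgap
  linarith

theorem isLeast_bondEnergies_prod_bondSign (J : ι → ℝ) :
    IsLeast (bondEnergies J (∏ i, bondSign (J i))) (-∑ i, |J i|) :=
  ⟨⟨fun i => bondSign (J i), fun i => bondSign_mul_self _, rfl, by simp only [mul_bondSign]⟩,
    fun _ => neg_sum_abs_le_of_mem_bondEnergies⟩

theorem isLeast_bondEnergies_of_ne_prod_bondSign (J : ι → ℝ) (hι : (univ : Finset ι).Nonempty)
    {c : ℝ} (hc : c * c = 1) (hne : c ≠ ∏ i, bondSign (J i)) :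
    IsLeast (bondEnergies J c) (-∑ i, |J i| + 2 * univ.inf' hι fun i => |J i|) := by
  classical
  obtain ⟨i₀, -, hi₀⟩ := exists_mem_eq_inf' hι fun i => |J i|
  refine ⟨?_, fun E hE => ?_⟩
  · let t := Function.update (fun i => bondSign (J i)) i₀ (-bondSign (J i₀))
    have hJt : ∀ i, J i * t i = Function.update (fun i => |J i|) i₀ (-|J i₀|) i := by
      intro i
      rcases eq_or_ne i i₀ with rfl | hi
      · simp [t, mul_bondSign]
      · simp [t, hi, mul_bondSign]
    refine ⟨t, fun i => ?_, ?_, ?_⟩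
    · rcases eq_or_ne i i₀ with rfl | hi
      · simp [t, bondSign_mul_self]
      · simp [t, hi, bondSign_mul_self]
    · rw [prod_update_of_mem (mem_univ _), sdiff_singleton_eq_erase, neg_mul,
        mul_prod_erase univ (fun i => bondSign (J i)) (mem_univ _)]
      exact (eq_neg_of_mul_self_eq_one_of_ne hc
        (prod_mul_self_eq_one fun i => bondSign_mul_self _) hne).symm
    · rw [sum_congr rfl fun i _ => hJt i, sum_update_of_mem (mem_univ _), sdiff_singleton_eq_erase,
        hi₀, ← add_sum_erase univ (fun i => |J i|) (mem_univ i₀)]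
      ring
  · obtain ⟨i, hi⟩ := exists_neg_sum_abs_add_le_of_mem_bondEnergies hne hE
    have := inf'_le (fun i => |J i|) (mem_univ i)
    linarith

end Bonds

theorem spinEnergies_eq_bondEnergies {k : ℕ} (J : Fin k → ℝ) {zu : ℝ} (hu : zu * zu = 1)
    (zv : ℝ) :
    {E : ℝ | ∃ s : Fin (k + 1) → ℝ,
        (∀ i, s i ∈ ({-1, 1} : Set ℝ)) ∧ s 0 = zu ∧ s (Fin.last k) = zv ∧
        E = -∑ i : Fin k, J i * s i.castSucc * s i.succ} = bondEnergies J (zu * zv) := by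
  simp only [mem_neg_one_one_iff_mul_self_eq_one, mul_assoc]
  ext E
  constructor
  · rintro ⟨s, hs, rfl, rfl, rfl⟩
    exact ⟨fun i => s i.castSucc * s i.succ, fun i => by rw [mul_mul_mul_comm, hs, hs, one_mul],
      Fin.prod_castSucc_mul_succ_of_mul_self s hs, rfl⟩
  · rintro ⟨t, ht, hprod, rfl⟩
    obtain ⟨s, hs, hs0, hst⟩ := Fin.exists_castSucc_mul_succ_eq hu ht
    have hlast : zu * s (Fin.last k) = zu * zv := by
      rw [← hprod, ← hs0, ← Fin.prod_castSucc_mul_succ_of_mul_self s hs]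
      exact prod_congr rfl fun i _ => hst i
    exact ⟨s, hs, hs0, mul_left_cancel₀ (left_ne_zero_of_mul_eq_one hu) hlast,
      by simp only [hst]⟩

theorem spin_chain_min_general (k : ℕ) (hk : 1 ≤ k) (J : Fin k → ℝ)
    (zu zv : ℝ) (hu : zu ∈ ({-1, 1} : Set ℝ)) (hv : zv ∈ ({-1, 1} : Set ℝ)) :
    IsLeast
      {E : ℝ | ∃ s : Fin (k + 1) → ℝ,
        (∀ i, s i ∈ ({-1, 1} : Set ℝ)) ∧ s 0 = zu ∧ s (Fin.last k) = zv ∧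
        E = -∑ i : Fin k, J i * s i.castSucc * s i.succ}
      (if zv = (-1 : ℝ) ^ (Finset.univ.filter (fun i => J i < 0)).card * zu
        then -∑ i : Fin k, |J i|
        else -∑ i : Fin k, |J i|
          + 2 * Finset.univ.inf' (Finset.univ_nonempty_iff.mpr ⟨⟨0, hk⟩⟩) (fun i => |J i|)) := by
  rw [mem_neg_one_one_iff_mul_self_eq_one] at hu hv
  rw [spinEnergies_eq_bondEnergies J hu, ← prod_bondSign]
  set σ := ∏ i, bondSign (J i)
  have hparity : zv = σ * zu ↔ zu * zv = σ :=
    ⟨fun h => by linear_combination zu * h + σ * hu, fun h => by linear_combination zu * h - zv * hu⟩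
  split_ifs with h
  · rw [hparity.1 h]
    exact isLeast_bondEnergies_prod_bondSign J
  · refine isLeast_bondEnergies_of_ne_prod_bondSign J _ ?_ (mt hparity.2 h)
    rw [mul_mul_mul_comm, hu, hv, one_mul]

/-- For a spin chain with Hamiltonian
`H(z_u, z_v, s) = -∑_{i=1}^{k} J_i s_{i-1} s_i` (with `s_0 = z_u`, `s_k = z_v`,
all spins in `{-1,+1}`), the minimum over internal spin assignments equals
`-∑ |J_i|` if `z_v = (-1)^p z_u`, and `-∑ |J_i| + 2 min_i |J_i|` otherwise,
where `p` is the number of negative couplings. -/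
theorem spin_chain_min (k : ℕ) (hk : 1 ≤ k) (J : Fin k → ℝ) (hJ : ∀ i, J i ≠ 0)
    (zu zv : ℝ) (hu : zu ∈ ({-1, 1} : Set ℝ)) (hv : zv ∈ ({-1, 1} : Set ℝ)) :
    IsLeast
      {E : ℝ | ∃ s : Fin (k + 1) → ℝ,
        (∀ i, s i ∈ ({-1, 1} : Set ℝ)) ∧ s 0 = zu ∧ s (Fin.last k) = zv ∧
        E = -∑ i : Fin k, J i * s i.castSucc * s i.succ}
      (if zv = (-1 : ℝ) ^ (Finset.univ.filter (fun i => J i < 0)).card * zu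
        then -∑ i : Fin k, |J i|
        else -∑ i : Fin k, |J i|
          + 2 * Finset.univ.inf' (Finset.univ_nonempty_iff.mpr ⟨⟨0, hk⟩⟩) (fun i => |J i|)) :=
  spin_chain_min_general k hk J zu zv hu hv
end

section
/- For a spin chain with couplings J_1, ..., J_k and effective coupling strength J_eff := (-1)^p min_i |J_i| (where p is the number of negative couplings), the minimum energy over internal spins satisfies min_s H(z_u, z_v, s) = (min_i |J_i| - ∑_i |J_i|) - J_eff · z_u · z_v for all z_u, z_v ∈ {-1,+1}. -/
open Finset

private lemma pm_iff (x : ℝ) : x ∈ ({-1, 1} : Set ℝ) ↔ x = -1 ∨ x = 1 := by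
  simp [Set.mem_insert_iff]

private lemma pm_mul {x y : ℝ} (hx : x ∈ ({-1, 1} : Set ℝ)) (hy : y ∈ ({-1, 1} : Set ℝ)) :
    x * y ∈ ({-1, 1} : Set ℝ) := by
  rw [pm_iff] at *
  rcases hx with h | h <;> rcases hy with h' | h' <;> subst h <;> subst h' <;> norm_num

private lemma pm_sq {x : ℝ} (hx : x ∈ ({-1, 1} : Set ℝ)) : x * x = 1 := by
  rw [pm_iff] at hx; rcases hx with h | h <;> subst h <;> norm_num

private lemma pm_abs {x : ℝ} (hx : x ∈ ({-1, 1} : Set ℝ)) : |x| = 1 := by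
  rw [pm_iff] at hx; rcases hx with h | h <;> subst h <;> norm_num

private lemma prod_telescope {k : ℕ} (s : Fin (k+1) → ℝ)
    (hs : ∀ i, s i ∈ ({-1, 1} : Set ℝ)) :
    ∏ i : Fin k, (s i.castSucc * s i.succ) = s 0 * s (Fin.last k) := by
  have h1 : ∏ i : Fin k, s i.castSucc * s i.succ
      = (∏ i : Fin k, s i.castSucc) * ∏ i : Fin k, s i.succ := Finset.prod_mul_distrib
  have h2 : (∏ j : Fin (k+1), s j) = (∏ i : Fin k, s i.castSucc) * s (Fin.last k) :=
    Fin.prod_univ_castSucc s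
  have h3 : (∏ j : Fin (k+1), s j) = s 0 * ∏ i : Fin k, s i.succ :=
    Fin.prod_univ_succ s
  have hP : (∏ j : Fin (k+1), s j) * (∏ j : Fin (k+1), s j) = 1 := by
    rw [← Finset.prod_mul_distrib]
    exact Finset.prod_eq_one (fun j _ => pm_sq (hs j))
  have ha : s 0 * s 0 = 1 := pm_sq (hs 0)
  have hb : s (Fin.last k) * s (Fin.last k) = 1 := pm_sq (hs (Fin.last k))
  have hA : (∏ i : Fin k, s i.castSucc) = (∏ j : Fin (k+1), s j) * s (Fin.last k) := by
    linear_combination -(∏ i : Fin k, s i.castSucc) * hb - s (Fin.last k) * h2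
  have hB : (∏ i : Fin k, s i.succ) = s 0 * (∏ j : Fin (k+1), s j) := by
    linear_combination -(∏ i : Fin k, s i.succ) * ha - s 0 * h3
  rw [h1, hA, hB]
  linear_combination s 0 * s (Fin.last k) * hP

private lemma prod_sign {k : ℕ} (J : Fin k → ℝ) :
    ∏ i, J i
      = (-1 : ℝ) ^ ((Finset.univ.filter (fun i => J i < 0)).card) * ∏ i, |J i| := by
  calc ∏ i, J i = ∏ i, ((if J i < 0 then (-1 : ℝ) else 1) * |J i|) := by
        refine Finset.prod_congr rfl fun i _ => ?_
        split
        · rw [abs_of_neg (by assumption)]; ring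
        · rw [abs_of_nonneg (le_of_not_gt (by assumption))]; ring
    _ = (∏ i, (if J i < 0 then (-1 : ℝ) else 1)) * ∏ i, |J i| := Finset.prod_mul_distrib
    _ = _ := by
        rw [Finset.prod_ite, Finset.prod_const, Finset.prod_const, one_pow, mul_one]

/-- For a spin chain with couplings `J_1, ..., J_k` and effective
coupling strength `J_eff := (-1)^p min_i |J_i|` (`p` the number of negative
couplings), the minimum energy over internal spins satisfies
`min_s H(z_u, z_v, s) = (min_i |J_i| - ∑_i |J_i|) - J_eff z_u z_v`
for all `z_u, z_v ∈ {-1,+1}`. -/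
theorem spin_chain_effective_coupling (k : ℕ) (hk : 1 ≤ k) (J : Fin k → ℝ)
    (hJ : ∀ i, J i ≠ 0)
    (zu zv : ℝ) (hu : zu ∈ ({-1, 1} : Set ℝ)) (hv : zv ∈ ({-1, 1} : Set ℝ)) :
    IsLeast
      {E : ℝ | ∃ s : Fin (k + 1) → ℝ,
        (∀ i, s i ∈ ({-1, 1} : Set ℝ)) ∧ s 0 = zu ∧ s (Fin.last k) = zv ∧
        E = -∑ i : Fin k, J i * s i.castSucc * s i.succ}
      ((Finset.univ.inf' (Finset.univ_nonempty_iff.mpr ⟨⟨0, hk⟩⟩) (fun i => |J i|)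
          - ∑ i : Fin k, |J i|)
        - ((-1 : ℝ) ^ (Finset.univ.filter (fun i => J i < 0)).card
            * Finset.univ.inf' (Finset.univ_nonempty_iff.mpr ⟨⟨0, hk⟩⟩) (fun i => |J i|))
          * zu * zv) := by
  have hne : (Finset.univ : Finset (Fin k)).Nonempty :=
    Finset.univ_nonempty_iff.mpr ⟨⟨0, hk⟩⟩
  set p := (Finset.univ.filter (fun i => J i < 0)).card with hp
  set m := Finset.univ.inf' (Finset.univ_nonempty_iff.mpr ⟨⟨0, hk⟩⟩) (fun i => |J i|)
    with hm
  obtain ⟨i₀, -, hmi₀⟩ := Finset.exists_mem_eq_inf' hne (fun i => |J i|)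
  have hmi₀ : m = |J i₀| := hmi₀
  set ε : ℝ := (-1 : ℝ) ^ p * (zu * zv) with hεdef
  have hval : ((m - ∑ i : Fin k, |J i|) - ((-1 : ℝ) ^ p * m) * zu * zv)
      = (m - ∑ i : Fin k, |J i|) - ε * m := by rw [hεdef]; ring
  have hpow : (-1 : ℝ) ^ p = 1 ∨ (-1 : ℝ) ^ p = -1 := neg_one_pow_eq_or ℝ p
  have hpowpm : (-1 : ℝ) ^ p ∈ ({-1, 1} : Set ℝ) := by
    rw [pm_iff]; tauto
  have hε : ε = 1 ∨ ε = -1 := by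
    have := pm_mul hpowpm (pm_mul hu hv)
    rw [pm_iff] at this; tauto
  have hpow2 : (-1 : ℝ) ^ p * (-1 : ℝ) ^ p = 1 := pm_sq hpowpm
  have huu : zu * zu = 1 := pm_sq hu
  have hvv : zv * zv = 1 := pm_sq hv
  rw [hval]
  constructor
  · -- membership
    set sg : Fin k → ℝ := fun i => if J i < 0 then -1 else 1 with hsg
    set σ : Fin k → ℝ := fun i => (if i = i₀ then ε else 1) * sg i with hσdef
    have hσpm : ∀ i, σ i ∈ ({-1, 1} : Set ℝ) := by
      intro i
      show ((if i = i₀ then ε else 1) * sg i) ∈ ({-1, 1} : Set ℝ)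
      refine pm_mul ?_ ?_
      · split <;> rw [pm_iff] <;> tauto
      · show (if J i < 0 then (-1:ℝ) else 1) ∈ ({-1, 1} : Set ℝ)
        split <;> rw [pm_iff] <;> tauto
    have hJσ : ∀ i, J i * σ i = (if i = i₀ then ε else 1) * |J i| := by
      intro i
      simp only [hσdef, hsg]
      rcases lt_or_ge (J i) 0 with h | h
      · rw [if_pos h, abs_of_neg h]; ring
      · rw [if_neg (not_lt.mpr h), abs_of_nonneg h]; ring
    have hprodσ : ∏ i, σ i = zu * zv := by
      rw [hσdef, Finset.prod_mul_distrib]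
      have h1 : (∏ i, (if i = i₀ then ε else 1)) = ε := by
        rw [Finset.prod_eq_single i₀ (fun b _ hb => if_neg hb)
          (fun h => absurd (Finset.mem_univ i₀) h), if_pos rfl]
      have h2 : (∏ i, sg i) = (-1 : ℝ) ^ p := by
        simp only [hsg]
        rw [Finset.prod_ite, Finset.prod_const, Finset.prod_const, one_pow, mul_one, hp]
      rw [h1, h2, hεdef]
      linear_combination (zu * zv) * hpow2
    refine ⟨fun j => zu * ∏ i ∈ Finset.univ.filter (fun i : Fin k => (i : ℕ) < (j : ℕ)), σ i,
      ?_, ?_, ?_, ?_⟩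
    · intro j
      refine pm_mul hu ?_
      exact Finset.prod_induction σ (· ∈ ({-1, 1} : Set ℝ)) (fun a b => pm_mul)
        (by show (1:ℝ) ∈ ({-1,1} : Set ℝ); rw [pm_iff]; tauto) (fun i _ => hσpm i)
    · have : Finset.univ.filter (fun i : Fin k => (i : ℕ) < ((0 : Fin (k+1)) : ℕ)) = ∅ := by
        ext x; simp
      show zu * ∏ i ∈ Finset.univ.filter (fun i : Fin k => (i : ℕ) < ((0 : Fin (k+1)) : ℕ)), σ i = zu
      rw [this, Finset.prod_empty, mul_one]
    · have : Finset.univ.filter (fun i : Fin k => (i : ℕ) < ((Fin.last k : Fin (k+1)) : ℕ))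
          = Finset.univ := by
        ext x; simp [Fin.val_last, x.isLt]
      show zu * ∏ i ∈ Finset.univ.filter (fun i : Fin k => (i : ℕ) < ((Fin.last k : Fin (k+1)) : ℕ)), σ i = zv
      rw [this, hprodσ]
      linear_combination zv * huu
    · have hstep : ∀ i : Fin k,
          (zu * ∏ j ∈ Finset.univ.filter (fun j : Fin k => (j : ℕ) < ((i.succ : Fin (k+1)) : ℕ)), σ j)
          = (zu * ∏ j ∈ Finset.univ.filter (fun j : Fin k => (j : ℕ) < ((i.castSucc : Fin (k+1)) : ℕ)), σ j) * σ i := by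
        intro i
        have hset : Finset.univ.filter (fun j : Fin k => (j : ℕ) < ((i.succ : Fin (k+1)) : ℕ))
            = insert i (Finset.univ.filter (fun j : Fin k => (j : ℕ) < ((i.castSucc : Fin (k+1)) : ℕ))) := by
          ext x
          simp only [Finset.mem_filter, Finset.mem_univ, true_and, Finset.mem_insert,
            Fin.val_succ, Fin.coe_castSucc]
          constructor
          · intro h
            rcases Nat.lt_succ_iff_lt_or_eq.mp h with h' | h'
            · exact Or.inr h'
            · exact Or.inl (Fin.ext h')
          · rintro (rfl | h)
            · omega
            · omega
        have hnotmem : i ∉ Finset.univ.filter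
            (fun j : Fin k => (j : ℕ) < ((i.castSucc : Fin (k+1)) : ℕ)) := by
          simp
        rw [hset, Finset.prod_insert hnotmem]
        ring
      have hterm : ∀ i : Fin k,
          J i * (zu * ∏ j ∈ Finset.univ.filter (fun j : Fin k => (j : ℕ) < ((i.castSucc : Fin (k+1)) : ℕ)), σ j)
            * (zu * ∏ j ∈ Finset.univ.filter (fun j : Fin k => (j : ℕ) < ((i.succ : Fin (k+1)) : ℕ)), σ j)
          = J i * σ i := by
        intro i
        show J i * (zu * ∏ j ∈ Finset.univ.filter (fun j : Fin k => (j : ℕ) < ((i.castSucc : Fin (k+1)) : ℕ)), σ j)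
            * (zu * ∏ j ∈ Finset.univ.filter (fun j : Fin k => (j : ℕ) < ((i.succ : Fin (k+1)) : ℕ)), σ j)
          = J i * σ i
        rw [hstep i]
        have hsq : (zu * ∏ j ∈ Finset.univ.filter (fun j : Fin k => (j : ℕ) < ((i.castSucc : Fin (k+1)) : ℕ)), σ j)
            * (zu * ∏ j ∈ Finset.univ.filter (fun j : Fin k => (j : ℕ) < ((i.castSucc : Fin (k+1)) : ℕ)), σ j) = 1 :=
          pm_sq (pm_mul hu (Finset.prod_induction σ (· ∈ ({-1, 1} : Set ℝ)) (fun a b => pm_mul)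
            (by show (1:ℝ) ∈ ({-1,1} : Set ℝ); rw [pm_iff]; tauto) (fun j _ => hσpm j)))
        linear_combination J i * σ i * hsq
      rw [Finset.sum_congr rfl (fun i _ => hterm i)]
      have hsum : ∑ i, J i * σ i = ε * |J i₀| + (∑ i, |J i| - |J i₀|) := by
        rw [Finset.sum_congr rfl (fun i _ => hJσ i),
          ← Finset.add_sum_erase _ _ (Finset.mem_univ i₀), if_pos rfl]
        congr 1
        rw [Finset.sum_congr rfl (fun j hj => by
            rw [if_neg (Finset.ne_of_mem_erase hj), one_mul]),
          Finset.sum_erase_eq_sub (Finset.mem_univ i₀)]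
      rw [hsum, hmi₀]
      ring
  · -- lower bound
    rintro E ⟨s, hs, h0, hl, rfl⟩
    set σ : Fin k → ℝ := fun i => s i.castSucc * s i.succ with hσdef
    have hσpm : ∀ i, σ i ∈ ({-1, 1} : Set ℝ) := fun i => pm_mul (hs _) (hs _)
    have hprodσ : ∏ i, σ i = zu * zv := by
      rw [hσdef]
      rw [prod_telescope s hs, h0, hl]
    have hE : (∑ i : Fin k, J i * s i.castSucc * s i.succ) = ∑ i, J i * σ i := by
      refine Finset.sum_congr rfl fun i _ => ?_
      rw [hσdef]; ring
    rw [hE]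
    have hkey : ∀ i, J i * σ i ≤ |J i| := by
      intro i
      calc J i * σ i ≤ |J i * σ i| := le_abs_self _
        _ = |J i| := by rw [abs_mul, pm_abs (hσpm i), mul_one]
    rcases hε with hε1 | hε1
    · -- ε = 1 : bound is -∑ |J|
      rw [hε1]
      have : ∑ i, J i * σ i ≤ ∑ i, |J i| :=
        Finset.sum_le_sum fun i _ => hkey i
      linarith
    · -- ε = -1
      rw [hε1]
      have hflip : ∃ i, J i * σ i = -|J i| := by
        by_contra hcon
        push_neg at hcon
        have hall : ∀ i, J i * σ i = |J i| := by
          intro i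
          have habs : |J i * σ i| = |J i| := by
            rw [abs_mul, pm_abs (hσpm i), mul_one]
          rcases eq_or_eq_neg_of_abs_eq habs with h | h
          · exact h
          · exact absurd h (hcon i)
        have hprodJσ : ∏ i, (J i * σ i) = ∏ i, |J i| :=
          Finset.prod_congr rfl fun i _ => hall i
        rw [Finset.prod_mul_distrib, hprodσ, prod_sign J, ← hp] at hprodJσ
        have habsne : (∏ i, |J i|) ≠ 0 :=
          Finset.prod_ne_zero_iff.mpr fun i _ => abs_ne_zero.mpr (hJ i)
        have : ε * ∏ i, |J i| = 1 * ∏ i, |J i| := by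
          rw [hεdef]; linarith [hprodJσ]
        have := mul_right_cancel₀ habsne this
        rw [this] at hε1
        norm_num at hε1
      obtain ⟨i₁, hi₁⟩ := hflip
      have hsplit : ∑ i, J i * σ i = -|J i₁| + ∑ i ∈ Finset.univ.erase i₁, J i * σ i := by
        rw [← Finset.add_sum_erase _ _ (Finset.mem_univ i₁), hi₁]
      have hrest : ∑ i ∈ Finset.univ.erase i₁, J i * σ i
          ≤ ∑ i, |J i| - |J i₁| := by
        rw [← Finset.sum_erase_eq_sub (Finset.mem_univ i₁)]
        exact Finset.sum_le_sum fun i _ => hkey i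
      have hmle : m ≤ |J i₁| := Finset.inf'_le _ (Finset.mem_univ i₁)
      have : ∑ i, J i * σ i ≤ ∑ i, |J i| - 2 * m := by
        rw [hsplit]; linarith
      linarith
end

section
/- For the k-variable NAE clause-gadget Hamiltonian (linked antiferromagnetic triangles), a ground state exists with the logical spins Z_{1,1}, Z_{1,2}, Z_{2,2}, ..., Z_{k-2,2}, Z_{k-2,3} taking any prescribed values v_1, ..., v_k ∈ {-1,+1} if and only if not all of v_1, ..., v_k are equal. -/
/-!
Each triangle term is at least `-1`, with equality iff its spins are not all equal, and each link
term is at least `-1`, with equality iff its spins are opposite; `-(2k-5)` is the sum of these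
bounds, so a ground state is a configuration attaining every one of them.

If all logical spins equal `s`, the first triangle forces its third spin to `-s`, the link then
forces the next first spin to `s`, and so on down the chain, until the last logical spin is forced
to `-s`. Conversely, if `v j ≠ v 0` (spins indexed from `0`), let the first spin of triangle `i`
be `v 0` for `i < j` and `-v (k-1)` for `i ≥ j`, and each third spin the opposite of the next
first spin: the first spin only changes after the triangle whose middle spin is `v j ≠ v 0`, so
no triangle is all-equal.
-/

/-- The `k`-variable NAE clause-gadget Hamiltonian: `k-2` antiferromagnetic
triangles (spins `Z i 0, Z i 1, Z i 2`) with the `k-3` linking terms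
`Z_{i,3} Z_{i+1,1}`. -/
noncomputable def gadgetH (k : ℕ) (Z : Fin (k - 2) → Fin 3 → ℝ) : ℝ :=
  (∑ i : Fin (k - 2), (Z i 0 * Z i 1 + Z i 1 * Z i 2 + Z i 0 * Z i 2)) +
  ∑ i : Fin (k - 3),
    Z ⟨i.1, by have := i.isLt; omega⟩ 2 * Z ⟨i.1 + 1, by have := i.isLt; omega⟩ 0

section Spin

variable {R : Type*} [Ring R] {a b c s : R}

lemma spin_ne_zero [Nontrivial R] (ha : a ∈ ({-1, 1} : Set R)) : a ≠ 0 := by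
  rcases ha with rfl | rfl <;> norm_num

lemma neg_mem_spin (ha : a ∈ ({-1, 1} : Set R)) : -a ∈ ({-1, 1} : Set R) := by
  rcases ha with rfl | rfl <;> norm_num

lemma spin_eq_neg_of_ne (ha : a ∈ ({-1, 1} : Set R)) (hs : s ∈ ({-1, 1} : Set R))
    (h : a ≠ s) : a = -s := by
  rcases ha with rfl | rfl <;> rcases hs with rfl | rfl <;> norm_num at *

lemma neg_one_le_spin_mul [LinearOrder R] [IsStrictOrderedRing R]
    (ha : a ∈ ({-1, 1} : Set R)) (hb : b ∈ ({-1, 1} : Set R)) :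
    -1 ≤ a * b := by
  rcases ha with rfl | rfl <;> rcases hb with rfl | rfl <;> norm_num

lemma spin_mul_eq_neg_one_iff (ha : a ∈ ({-1, 1} : Set R)) (hb : b ∈ ({-1, 1} : Set R)) :
    a * b = -1 ↔ b = -a := by
  rcases ha with rfl | rfl <;> rcases hb with rfl | rfl <;> norm_num [eq_comm]

lemma neg_one_le_triangle [LinearOrder R] [IsStrictOrderedRing R]
    (ha : a ∈ ({-1, 1} : Set R)) (hb : b ∈ ({-1, 1} : Set R))
    (hc : c ∈ ({-1, 1} : Set R)) : -1 ≤ a * b + b * c + a * c := by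
  rcases ha with rfl | rfl <;> rcases hb with rfl | rfl <;> rcases hc with rfl | rfl <;> norm_num

lemma triangle_eq_neg_one_iff [LinearOrder R] [IsStrictOrderedRing R]
    (ha : a ∈ ({-1, 1} : Set R)) (hb : b ∈ ({-1, 1} : Set R))
    (hc : c ∈ ({-1, 1} : Set R)) : a * b + b * c + a * c = -1 ↔ ¬ (a = b ∧ b = c) := by
  rcases ha with rfl | rfl <;> rcases hb with rfl | rfl <;> rcases hc with rfl | rfl <;> norm_num

end Spin

section Gadget

variable {k : ℕ} {Z : Fin (k - 2) → Fin 3 → ℝ} {s : ℝ}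

theorem gadgetH_eq_iff (hk : 2 < k) (hZ : ∀ i j, Z i j ∈ ({-1, 1} : Set ℝ)) :
    gadgetH k Z = -(2 * (k : ℝ) - 5) ↔
      (∀ i, Z i 0 * Z i 1 + Z i 1 * Z i 2 + Z i 0 * Z i 2 = -1) ∧
      ∀ i : Fin (k - 3), Z ⟨i.1, by have := i.isLt; omega⟩ 2 *
        Z ⟨i.1 + 1, by have := i.isLt; omega⟩ 0 = -1 := by
  have hbound : -(2 * (k : ℝ) - 5) =
      ∑ _i : Fin (k - 2), (-1 : ℝ) + ∑ _i : Fin (k - 3), (-1 : ℝ) := by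
    simp only [Finset.sum_const, Finset.card_univ, Fintype.card_fin, nsmul_eq_mul]
    push_cast [Nat.cast_sub (show 2 ≤ k by omega), Nat.cast_sub hk]
    ring
  rw [gadgetH, hbound, eq_comm, add_eq_add_iff_eq_and_eq
      (Finset.sum_le_sum fun i _ => neg_one_le_triangle (hZ i 0) (hZ i 1) (hZ i 2))
      (Finset.sum_le_sum fun i _ => neg_one_le_spin_mul (hZ _ 2) (hZ _ 0)),
    Finset.sum_eq_sum_iff_of_le fun i _ => neg_one_le_triangle (hZ i 0) (hZ i 1) (hZ i 2),
    Finset.sum_eq_sum_iff_of_le fun i _ => neg_one_le_spin_mul (hZ _ 2) (hZ _ 0)]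
  simp only [Finset.mem_univ, forall_const, eq_comm (a := (-1 : ℝ))]

theorem ground_third_spin_eq_neg_of_logical_eq (hk : 2 < k)
    (hZ : ∀ i j, Z i j ∈ ({-1, 1} : Set ℝ))
    (hE : gadgetH k Z = -(2 * (k : ℝ) - 5)) (h0 : Z ⟨0, by omega⟩ 0 = s) (h1 : ∀ i, Z i 1 = s) :
    ∀ n (hn : n < k - 2), Z ⟨n, hn⟩ 2 = -s := by
  obtain ⟨htri, hlink⟩ := (gadgetH_eq_iff hk hZ).1 hE
  have third_of_first : ∀ i, Z i 0 = s → Z i 2 = -s := fun i hi =>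
    spin_eq_neg_of_ne (hZ i 2) (hi ▸ hZ i 0) fun h2 =>
      (triangle_eq_neg_one_iff (hZ i 0) (hZ i 1) (hZ i 2)).1 (htri i)
        ⟨hi.trans (h1 i).symm, (h1 i).trans h2.symm⟩
  intro n
  induction n with
  | zero => exact fun _ => third_of_first _ h0
  | succ n ih =>
    intro hn
    apply third_of_first
    have hlink_n := (spin_mul_eq_neg_one_iff (hZ _ 2) (hZ _ 0)).1 (hlink ⟨n, by omega⟩)
    rw [hlink_n, ih (by omega), neg_neg]

def chainState (k : ℕ) (v : Fin k → ℝ) (σ : ℕ → ℝ) : Fin (k - 2) → Fin 3 → ℝ :=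
  fun i => ![σ i, v ⟨i + 1, by omega⟩, -σ (i + 1)]

variable {v : Fin k → ℝ} {σ : ℕ → ℝ}

lemma chainState_mem (hv : ∀ i, v i ∈ ({-1, 1} : Set ℝ)) (hσ : ∀ n, σ n ∈ ({-1, 1} : Set ℝ))
    (i : Fin (k - 2)) (j : Fin 3) : chainState k v σ i j ∈ ({-1, 1} : Set ℝ) := by
  fin_cases j
  · exact hσ _
  · exact hv _
  · exact neg_mem_spin (hσ _)

theorem gadgetH_chainState (hk : 2 < k) (hv : ∀ i, v i ∈ ({-1, 1} : Set ℝ))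
    (hσ : ∀ n, σ n ∈ ({-1, 1} : Set ℝ))
    (hstep : ∀ i : Fin (k - 2), σ i = v ⟨i + 1, by omega⟩ → σ (i + 1) = σ i) :
    gadgetH k (chainState k v σ) = -(2 * (k : ℝ) - 5) := by
  refine (gadgetH_eq_iff hk (chainState_mem hv hσ)).2 ⟨fun i => ?_, fun i => ?_⟩
  · simp only [chainState, Matrix.cons_val_zero, Matrix.cons_val_one, Matrix.cons_val_two,
      Matrix.head_cons, Matrix.tail_cons]
    rw [triangle_eq_neg_one_iff (hσ _) (hv _) (neg_mem_spin (hσ _))]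
    rintro ⟨h01, h12⟩
    exact spin_ne_zero (hσ i) (by linarith [hstep i h01])
  · simp only [chainState, Matrix.cons_val_zero, Matrix.cons_val_two, Matrix.tail_cons,
      Matrix.head_cons]
    exact (spin_mul_eq_neg_one_iff (neg_mem_spin (hσ _)) (hσ _)).2 (neg_neg _).symm

theorem exists_ground_state_of_ne (hk : 2 < k) (hv : ∀ i, v i ∈ ({-1, 1} : Set ℝ)) {j : Fin k}
    (hj : v j ≠ v ⟨0, by omega⟩) :
    ∃ Z : Fin (k - 2) → Fin 3 → ℝ,
      (∀ i j, Z i j ∈ ({-1, 1} : Set ℝ)) ∧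
      gadgetH k Z = -(2 * (k : ℝ) - 5) ∧
      Z ⟨0, by omega⟩ 0 = v ⟨0, by omega⟩ ∧
      (∀ i : Fin (k - 2), Z i 1 = v ⟨i.1 + 1, by have := i.isLt; omega⟩) ∧
      Z ⟨k - 3, by omega⟩ 2 = v ⟨k - 1, by omega⟩ := by
  let σ : ℕ → ℝ := fun n => if n < j then v ⟨0, by omega⟩ else -v ⟨k - 1, by omega⟩
  have hj0 : 0 < j.1 := Nat.pos_of_ne_zero fun h => hj (congrArg v (Fin.ext h))
  have hσ : ∀ n, σ n ∈ ({-1, 1} : Set ℝ) := fun n => by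
    by_cases h : n < j
    · simpa [σ, h] using hv _
    · simpa [σ, h] using neg_mem_spin (hv _)
  refine ⟨chainState k v σ, chainState_mem hv hσ, gadgetH_chainState hk hv hσ fun i hi => ?_,
    by simp [chainState, σ, hj0], fun i => rfl, ?_⟩
  · simp only [σ] at hi ⊢
    split_ifs at hi ⊢ <;> first | rfl | omega | skip
    have hij : (⟨i + 1, by omega⟩ : Fin k) = j := Fin.ext (by simp only; omega)
    exact absurd (hij ▸ hi.symm) hj
  · show -σ (k - 3 + 1) = _
    by_cases h : k - 3 + 1 < j
    · have hjk : j = ⟨k - 1, by omega⟩ := Fin.ext (by have := j.isLt; simp only; omega)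
      rw [hjk] at hj
      simp only [σ, h, if_true]
      exact (spin_eq_neg_of_ne (hv _) (hv _) hj).symm
    · simp [σ, h]

end Gadget

/-- There is a ground state (energy `-(2k-5)`) of the
`k`-variable NAE clause-gadget whose logical spins
`Z_{1,1}, Z_{1,2}, Z_{2,2}, ..., Z_{k-2,2}, Z_{k-2,3}` take prescribed values
`v_1, ..., v_k ∈ {-1,+1}` iff not all of `v_1, ..., v_k` are equal. -/
theorem clause_gadget_logical_ground_states (k : ℕ) (hk : 3 ≤ k)
    (v : Fin k → ℝ) (hv : ∀ i, v i ∈ ({-1, 1} : Set ℝ)) :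
    (∃ Z : Fin (k - 2) → Fin 3 → ℝ,
      (∀ i j, Z i j ∈ ({-1, 1} : Set ℝ)) ∧
      gadgetH k Z = -(2 * (k : ℝ) - 5) ∧
      Z ⟨0, by omega⟩ 0 = v ⟨0, by omega⟩ ∧
      (∀ i : Fin (k - 2), Z i 1 = v ⟨i.1 + 1, by have := i.isLt; omega⟩) ∧
      Z ⟨k - 3, by omega⟩ 2 = v ⟨k - 1, by omega⟩) ↔
    ¬ ∀ i j, v i = v j := by
  constructor
  · rintro ⟨Z, hZ, hE, h0, h1, hlast⟩ hall
    have hthird := ground_third_spin_eq_neg_of_logical_eq hk hZ hE h0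
      (fun i => (h1 i).trans (hall _ _)) (k - 3) (by omega)
    rw [hlast, hall _ ⟨0, by omega⟩] at hthird
    exact spin_ne_zero (hv ⟨0, by omega⟩) (by linarith)
  · intro hne
    obtain ⟨a, b, hab⟩ : ∃ a b, v a ≠ v b := by simpa only [not_forall] using hne
    by_cases ha : v a = v ⟨0, by omega⟩
    · exact exists_ground_state_of_ne hk hv (j := b) fun hb => hab (ha.trans hb.symm)
    · exact exists_ground_state_of_ne hk hv ha
end

section
/- In the setting of complete degree reduction: with N spins forming a complete graph with all internal couplings ≥ K_ext > 0, each vertex incident to at most t ≤ N/2 external edges each with edge influence magnitude at most K_ext, if 0 < F < N/2 then the energy change Δ from flipping F spins away from the majority sign satisfies Δ ≥ 2[K_ext·F(N−F) − ∑_{i=1}^F |P_i^min|] > 0, where |P_i^min| ≤ t·K_ext for each i. -/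
open Finset

theorem card_mul_card_mul_le_sum_sum {ι κ : Type*} {s : Finset ι} {u : Finset κ}
    {J : ι → κ → ℝ} {K : ℝ} (hJ : ∀ i ∈ s, ∀ j ∈ u, K ≤ J i j) :
    (#s : ℝ) * #u * K ≤ ∑ i ∈ s, ∑ j ∈ u, J i j := by
  have hrow : ∀ i ∈ s, (#u : ℝ) * K ≤ ∑ j ∈ u, J i j := fun i hi => by
    simpa using card_nsmul_le_sum u (J i) K (hJ i hi)
  simpa [mul_assoc] using card_nsmul_le_sum s _ _ hrow

theorem degree_reduction_case1_general (N F : ℕ) (K t : ℝ)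
    (hK : 0 < K) (htN : t ≤ (N : ℝ) / 2)
    (hF0 : 0 < F) (hF : 2 * F < N)
    (J : ℕ → ℕ → ℝ) (hJ : ∀ i j, K ≤ J i j)
    (a b : ℕ → ℝ) (ha : ∀ i, 0 ≤ a i)
    (hab : ∀ i, a i + b i ≤ t * K) :
    2 * (K * (F : ℝ) * ((N : ℝ) - F) - ∑ i ∈ range F, b i) ≤
      2 * ((∑ i ∈ range F, ∑ j ∈ Ico F N, J i j)
        + ∑ i ∈ range F, a i - ∑ i ∈ range F, b i) ∧
    0 < 2 * ((∑ i ∈ range F, ∑ j ∈ Ico F N, J i j)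
        + ∑ i ∈ range F, a i - ∑ i ∈ range F, b i) ∧
    ∀ i, b i ≤ t * K := by
  have hb : ∀ i, b i ≤ t * K := fun i => by linarith [ha i, hab i]
  have hcoupling : K * F * ((N : ℝ) - F) ≤ ∑ i ∈ range F, ∑ j ∈ Ico F N, J i j := by
    have := card_mul_card_mul_le_sum_sum (s := range F) (u := Ico F N) fun i _ j _ => hJ i j
    rw [card_range, Nat.card_Ico, Nat.cast_sub (by omega)] at this
    linarith
  have hb_sum : ∑ i ∈ range F, b i ≤ F * (t * K) := by
    simpa using sum_le_card_nsmul (range F) b (t * K) fun i _ => hb i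
  have ha_sum : 0 ≤ ∑ i ∈ range F, a i := sum_nonneg fun i _ => ha i
  -- `t ≤ N / 2 < N - F`: each flipped spin loses less to its external edges than it gains internally.
  have hgap : t < (N : ℝ) - F := by
    have : ((2 * F : ℕ) : ℝ) < N := Nat.cast_lt.mpr hF
    push_cast at this
    linarith
  have hbound_pos : 0 < K * F * ((N : ℝ) - F) - ∑ i ∈ range F, b i := by
    have : 0 < (F : ℝ) * K * ((N - F) - t) := by
      have : (0 : ℝ) < F := Nat.cast_pos.mpr hF0
      have : 0 < (N : ℝ) - F - t := by linarith
      positivity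
    linarith
  exact ⟨by linarith, by linarith, hb⟩

/-- In the setting of complete degree reduction (complete graph
on `N` spins with internal couplings `≥ K_ext > 0`, each vertex incident to at
most `t ≤ N/2` external edges with per-vertex majority/minority influences
`a i`, `b i` satisfying `a i + b i ≤ t K_ext`), if `0 < F < N/2` then the
energy change `Δ` from flipping `F` spins away from the majority sign
satisfies `Δ ≥ 2[K_ext F (N-F) − ∑_{i<F} b i] > 0`, and each `b i ≤ t K_ext`. -/
theorem degree_reduction_case1 (N F : ℕ) (hN : 2 ≤ N) (K t : ℝ)
    (hK : 0 < K) (ht : 0 < t) (htN : t ≤ (N : ℝ) / 2)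
    (hF0 : 0 < F) (hF : 2 * F < N)
    (J : ℕ → ℕ → ℝ) (hJ : ∀ i j, K ≤ J i j)
    (a b : ℕ → ℝ) (ha : ∀ i, 0 ≤ a i) (hb : ∀ i, 0 ≤ b i)
    (hab : ∀ i, a i + b i ≤ t * K) :
    2 * (K * (F : ℝ) * ((N : ℝ) - F) - ∑ i ∈ range F, b i) ≤
      2 * ((∑ i ∈ range F, ∑ j ∈ Ico F N, J i j)
        + ∑ i ∈ range F, a i - ∑ i ∈ range F, b i) ∧
    0 < 2 * ((∑ i ∈ range F, ∑ j ∈ Ico F N, J i j)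
        + ∑ i ∈ range F, a i - ∑ i ∈ range F, b i) ∧
    ∀ i, b i ≤ t * K :=
  degree_reduction_case1_general N F K t hK htN hF0 hF J hJ a b ha hab
end

section
/- If N_{n+1} is defined by ⌊N_{n+1}/2⌋ · N_{n+1} = D_n where D_n = ⌊N_n/2⌋ + N_n − 1 and N_n ≥ 4, then N_{n+1} ≤ √(5 N_n). -/
/-- If `N_{n+1}` (here `M`) satisfies
`⌊M/2⌋ · M = D_n` where `D_n = ⌊N/2⌋ + N − 1` and `N ≥ 4`, then
`M ≤ √(5N)`. -/
theorem degree_reduction_vertex_bound (N : ℕ) (hN : 4 ≤ N) (M : ℝ) (hM : 0 < M)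
    (h : (⌊M / 2⌋ : ℝ) * M = ((N / 2 : ℕ) : ℝ) + (N : ℝ) - 1) :
    M ≤ Real.sqrt (5 * N) := by
  by_contra hc
  push_neg at hc
  have hNr : (4:ℝ) ≤ (N:ℝ) := by exact_mod_cast hN
  have hsq : 5 * (N:ℝ) < M ^ 2 := by
    have h0 : (0:ℝ) ≤ 5 * N := by positivity
    nlinarith [Real.sq_sqrt h0, Real.sqrt_nonneg (5*(N:ℝ)), hc]
  have hfl : M / 2 - 1 < (⌊M / 2⌋ : ℝ) := Int.sub_one_lt_floor _
  have hhalf : ((N / 2 : ℕ) : ℝ) ≤ (N:ℝ) / 2 := by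
    exact Nat.cast_div_le
  nlinarith [mul_lt_mul_of_pos_right hfl hM, hsq, hhalf, hM, hNr, sq_nonneg (M - 5)]
end

section
/- If a sequence of reals D_n ≥ 5 satisfies D_{n+1} ≤ (3/2)√(3 D_n) for all n, then D_k ≤ (27/4)^{1−2^{−k}} · D_0^{2^{−k}} for all k ≥ 0. -/
/-- If a sequence of reals `D_n ≥ 5` satisfies
`D_{n+1} ≤ (3/2)√(3 D_n)` for all `n`, then
`D_k ≤ (27/4)^{1−2^{−k}} · D_0^{2^{−k}}` for all `k ≥ 0`. -/
theorem degree_recursion_bound (D : ℕ → ℝ) (hD : ∀ n, 5 ≤ D n)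
    (h : ∀ n, D (n + 1) ≤ (3 / 2) * Real.sqrt (3 * D n)) (k : ℕ) :
    D k ≤ ((27 : ℝ) / 4) ^ ((1 - ((2 : ℝ)⁻¹) ^ k) : ℝ)
      * (D 0) ^ (((2 : ℝ)⁻¹) ^ k : ℝ) := by
  have hD0 : (0:ℝ) < D 0 := lt_of_lt_of_le (by norm_num) (hD 0)
  induction k with
  | zero =>
    simp [Real.rpow_one]
  | succ k ih =>
    have hDk : (0:ℝ) < D k := lt_of_lt_of_le (by norm_num) (hD k)
    set a : ℝ := (2:ℝ)⁻¹ ^ k with ha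
    have ha0 : 0 < a := pow_pos (by norm_num) k
    have h1 : D (k+1) ≤ Real.sqrt ((27/4) * D k) := by
      have e : (3/2 : ℝ) * Real.sqrt (3 * D k) = Real.sqrt ((27/4) * D k) := by
        rw [show (27/4 : ℝ) * D k = (3/2)^2 * (3 * D k) by ring,
          Real.sqrt_mul (by positivity : (0:ℝ) ≤ (3/2)^2) (3 * D k),
          Real.sqrt_sq (by norm_num : (0:ℝ) ≤ 3/2)]
      calc D (k+1) ≤ (3/2) * Real.sqrt (3 * D k) := h k
        _ = _ := e
    have h2 : (27/4 : ℝ) * D k ≤ ((27:ℝ)/4) ^ ((2 - a):ℝ) * D 0 ^ (a:ℝ) := by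
      have := mul_le_mul_of_nonneg_left ih (by norm_num : (0:ℝ) ≤ 27/4)
      calc (27/4 : ℝ) * D k ≤ (27/4) * (((27:ℝ)/4) ^ ((1 - a):ℝ) * D 0 ^ (a:ℝ)) := this
        _ = ((27:ℝ)/4) ^ ((2 - a):ℝ) * D 0 ^ (a:ℝ) := by
            rw [show ((2:ℝ) - a) = 1 + (1 - a) by ring,
              Real.rpow_add (by norm_num), Real.rpow_one]
            ring
    have h3 : Real.sqrt ((27/4 : ℝ) * D k)
        ≤ Real.sqrt (((27:ℝ)/4) ^ ((2 - a):ℝ) * D 0 ^ (a:ℝ)) :=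
      Real.sqrt_le_sqrt h2
    have h4 : Real.sqrt (((27:ℝ)/4) ^ ((2 - a):ℝ) * D 0 ^ (a:ℝ))
        = ((27:ℝ)/4) ^ ((1 - a/2):ℝ) * D 0 ^ ((a/2):ℝ) := by
      rw [Real.sqrt_eq_rpow, Real.mul_rpow (by positivity) (by positivity),
        ← Real.rpow_mul (by norm_num), ← Real.rpow_mul hD0.le]
      congr 1 <;> ring_nf
    have hpow : ((2:ℝ)⁻¹) ^ (k+1) = a / 2 := by
      rw [pow_succ, ha]; ring
    calc D (k+1) ≤ Real.sqrt ((27/4) * D k) := h1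
      _ ≤ _ := h3
      _ = _ := h4
      _ = _ := by rw [hpow]
end
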